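/- Let (w, m, α) be a magnetic weighted graph on a nonempty finite type V with n = |V| ≥ 2, and let v₁ ≠ v₂ in V. Let S = {φ ∈ ℂ^V : φ(v₁) = φ(v₂)}, an (n−1)-dimensional subspace, equipped with the restriction of the inner product ⟨φ,ψ⟩_m = Σ_v m v·φ(v)·conj(ψ(v)), and let Δ̃ be the compression of Δ(w,m,α) to S, i.e., the self-adjoint operator on S determined by ⟨Δ̃φ, ψ⟩_m = ⟨Δ(w,m,α)φ, ψ⟩_m for all φ, ψ ∈ S. Let μ_1 ≤ … ≤ μ_{n−1} be the eigenvalues of Δ̃ with multiplicity. Then λ_k(w,m,α) ≤ μ_k ≤ λ_{k+1}(w,m,α) for all 1 ≤ k ≤ n − 1. -/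

import Mathlib

/-!
Conjugating by `diag(√m)` turns `Δ(w,m,α)`, which is self-adjoint for `⟨·,·⟩_m`, into a Hermitian
matrix `H`, and turns the embedding of `S` (weighted by the merged masses) into an isometry `P`, so
that `Δ̃` becomes similar to the compression `Pᴴ H P`. Cauchy interlacing for compressions is the
min–max test-vector argument: the span of the `k + 1` lowest eigenvectors of `Pᴴ H P`, pushed
forward by `P`, meets the span of the `N - k` highest eigenvectors of `H`, and a common nonzero
vector has Rayleigh quotient at most `μ_k` and at least `λ_k`. The upper bound is the same argument
for `-H`.
-/

/-- The magnetic weighted Laplacian `Δ(w,m,α)` as a matrix acting on `ℂ^V`: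
`(Δφ)(v) = (1/m v) · Σ_u w v u · (φ(v) − exp(i·α v u)·φ(u))`. -/
noncomputable def magLap {V : Type} [Fintype V] [DecidableEq V]
    (w : V → V → ℝ) (m : V → ℝ) (α : V → V → ℝ) : Matrix V V ℂ :=
  fun v u => (if v = u then (((∑ u', w v u') / m v : ℝ) : ℂ) else 0)
    - ((w v u / m v : ℝ) : ℂ) * Complex.exp (Complex.I * (α v u : ℝ))

/-- The eigenvalues (with multiplicity, nondecreasing) of a matrix with real
spectrum: real parts of the roots of the characteristic polynomial, sorted;
`lamk A k` is the `(k+1)`-st smallest (0-based index). -/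
noncomputable def lamk {V : Type} [Fintype V] [DecidableEq V] (A : Matrix V V ℂ) (k : ℕ) : ℝ :=
  ((A.charpoly.roots.map Complex.re).sort (· ≤ ·)).getD k 0

/-- The isomorphism from `ℂ^{V ∖ {v₂}}` onto the subspace
`S = {φ : φ(v₁) = φ(v₂)}` of `ℂ^V`. -/
noncomputable def liftFun {V : Type} [DecidableEq V] {v₁ v₂ : V} (hv : v₁ ≠ v₂)
    (ψ : {v : V // v ≠ v₂} → ℂ) : V → ℂ :=
  fun v => if h : v = v₂ then ψ ⟨v₁, hv⟩ else ψ ⟨v, h⟩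

open Finset Matrix

section KthSmallest

variable {ι : Type*} [Fintype ι]

noncomputable def kthSmallest (f : ι → ℝ) (k : ℕ) : ℝ :=
  ((univ.val.map f).sort (· ≤ ·)).getD k 0

theorem exists_equiv_monotone_kthSmallest (f : ι → ℝ) :
    ∃ e : Fin (Fintype.card ι) ≃ ι, Monotone (f ∘ e) ∧
      ∀ k (hk : k < Fintype.card ι), kthSmallest f k = f (e ⟨k, hk⟩) := by
  let σ := Tuple.sort (f ∘ (Fintype.equivFin ι).symm)
  let e := σ.trans (Fintype.equivFin ι).symm
  have hmono : Monotone (f ∘ e) := Tuple.monotone_sort (f ∘ (Fintype.equivFin ι).symm)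
  have hsort : (univ.val.map f).sort (· ≤ ·) = List.ofFn (f ∘ e) := by
    rw [← Multiset.map_univ_val_equiv e, Multiset.map_map, Fin.univ_val_map, Multiset.coe_sort]
    exact List.mergeSort_of_pairwise (by simpa using hmono.sortedLE_ofFn.pairwise)
  refine ⟨e, hmono, fun k hk => ?_⟩
  rw [kthSmallest, hsort, List.getD_eq_getElem _ _ (by simpa using hk), List.getElem_ofFn]
  rfl

theorem exists_card_eq_forall_le_kthSmallest (f : ι → ℝ) {k : ℕ} (hk : k < Fintype.card ι) :
    ∃ s : Finset ι, #s = k + 1 ∧ ∀ i ∈ s, f i ≤ kthSmallest f k := by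
  obtain ⟨e, hmono, hf⟩ := exists_equiv_monotone_kthSmallest f
  refine ⟨(Iic ⟨k, hk⟩).map e.toEmbedding, by simp, ?_⟩
  simp only [mem_map_equiv, mem_Iic, hf k hk]
  intro i hi
  simpa using hmono hi

theorem exists_card_eq_forall_kthSmallest_le (f : ι → ℝ) {k : ℕ} (hk : k < Fintype.card ι) :
    ∃ s : Finset ι, #s = Fintype.card ι - k ∧ ∀ i ∈ s, kthSmallest f k ≤ f i := by
  obtain ⟨e, hmono, hf⟩ := exists_equiv_monotone_kthSmallest f
  refine ⟨(Ici ⟨k, hk⟩).map e.toEmbedding, by simp, ?_⟩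
  simp only [mem_map_equiv, mem_Ici, hf k hk]
  intro i hi
  simpa using hmono hi

end KthSmallest

theorem Matrix.IsHermitian.lamk_eq_kthSmallest {n : Type} [Fintype n] [DecidableEq n]
    {A : Matrix n n ℂ} (hA : A.IsHermitian) (k : ℕ) :
    lamk A k = kthSmallest hA.eigenvalues k := by
  rw [lamk, kthSmallest, hA.roots_charpoly_eq_eigenvalues, Multiset.map_map]
  rfl

theorem lamk_conj {n : Type} [Fintype n] [DecidableEq n] {S : Matrix n n ℂ} (hS : IsUnit S)
    (A : Matrix n n ℂ) : lamk (S * A * S⁻¹) = lamk A := by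
  funext k
  rw [lamk, lamk, ← hS.unit_spec, Matrix.charpoly_units_conj]

theorem Matrix.exists_ne_zero_supported_mulVec_supported {K m n : Type*} [Field K] [Fintype m]
    [Fintype n]
    (Q : Matrix m n K) (s : Finset n) (u : Finset m) (hcard : Fintype.card m < #s + #u) :
    ∃ x : n → K, x ≠ 0 ∧ (∀ j ∉ s, x j = 0) ∧ ∀ i ∉ u, (Q *ᵥ x) i = 0 := by
  classical
  let extend : (s → K) →ₗ[K] (n → K) :=
    { toFun := fun c j => if h : j ∈ s then c ⟨j, h⟩ else 0
      map_add' := fun c c' => by ext j; by_cases h : j ∈ s <;> simp [h]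
      map_smul' := fun r c => by ext j; by_cases h : j ∈ s <;> simp [h] }
  let F : (s → K) →ₗ[K] ((uᶜ : Finset m) → K) :=
    LinearMap.funLeft K K Subtype.val ∘ₗ Q.mulVecLin ∘ₗ extend
  have hF : LinearMap.ker F ≠ ⊥ := LinearMap.ker_ne_bot_of_finrank_lt <| by
    simp only [Module.finrank_fintype_fun_eq_card, Fintype.card_coe, card_compl]
    have := card_le_univ u; omega
  obtain ⟨c, hc, hc0⟩ := Submodule.ne_bot_iff _ |>.mp hF
  refine ⟨extend c, fun h0 => hc0 (funext fun j => ?_), fun j hj => by simp [extend, hj],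
    fun i hi => ?_⟩
  · simpa [extend] using congrFun h0 j
  · simpa [F, LinearMap.funLeft] using
      congrFun (LinearMap.mem_ker.mp hc) ⟨i, by simpa using hi⟩

theorem Matrix.star_dotProduct_diagonal_mulVec {ι : Type*} [Fintype ι] [DecidableEq ι]
    (f : ι → ℝ) (z : ι → ℂ) :
    star z ⬝ᵥ (diagonal (Complex.ofReal ∘ f) *ᵥ z) = ↑(∑ i, f i * Complex.normSq (z i)) := by
  simp only [dotProduct, mulVec_diagonal, Pi.star_apply, Function.comp_apply, Complex.ofReal_sum,
    Complex.ofReal_mul, Complex.normSq_eq_conj_mul_self, RCLike.star_def]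
  exact sum_congr rfl fun i _ => by ring

/-- The min–max step: a nonzero `x` supported on `s` with `Q x` supported on `u` has Rayleigh
quotient at most `b` for `diag e` and at least `a` for `diag d`, and these quotients agree. -/
theorem le_of_isometry_diagonal {m n : Type*} [Fintype m] [Fintype n] [DecidableEq m]
    [DecidableEq n] {d : m → ℝ} {e : n → ℝ} {Q : Matrix m n ℂ} (hQ : Qᴴ * Q = 1)
    (hde : diagonal (Complex.ofReal ∘ e) = Qᴴ * diagonal (Complex.ofReal ∘ d) * Q)
    {s : Finset n} {u : Finset m} (hcard : Fintype.card m < #s + #u) {a b : ℝ}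
    (hs : ∀ j ∈ s, e j ≤ b) (hu : ∀ i ∈ u, a ≤ d i) : a ≤ b := by
  obtain ⟨x, hx0, hxs, hxu⟩ := Q.exists_ne_zero_supported_mulVec_supported s u hcard
  have rayleigh : ∀ f : m → ℝ, star x ⬝ᵥ ((Qᴴ * diagonal (Complex.ofReal ∘ f) * Q) *ᵥ x)
      = ↑(∑ i, f i * Complex.normSq ((Q *ᵥ x) i)) := fun f => by
    rw [← star_dotProduct_diagonal_mulVec, ← mulVec_mulVec, ← mulVec_mulVec, dotProduct_mulVec,
      ← star_mulVec]
  have hsum : ∑ j, e j * Complex.normSq (x j) = ∑ i, d i * Complex.normSq ((Q *ᵥ x) i) := by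
    exact_mod_cast (star_dotProduct_diagonal_mulVec e x).symm.trans (hde ▸ rayleigh d)
  have hnorm : ∑ j, Complex.normSq (x j) = ∑ i, Complex.normSq ((Q *ᵥ x) i) := by
    have hone : diagonal (Complex.ofReal ∘ fun _ : n => (1 : ℝ))
        = Qᴴ * diagonal (Complex.ofReal ∘ fun _ : m => (1 : ℝ)) * Q := by
      simp [Function.comp_def, hQ]
    have h := (star_dotProduct_diagonal_mulVec _ x).symm.trans (hone ▸ rayleigh _)
    simp only [one_mul] at h
    exact_mod_cast h
  have hpos : 0 < ∑ j, Complex.normSq (x j) := by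
    obtain ⟨j, hj⟩ := Function.ne_iff.mp hx0
    exact sum_pos' (fun j _ => Complex.normSq_nonneg _) ⟨j, mem_univ _, Complex.normSq_pos.mpr hj⟩
  refine le_of_mul_le_mul_right ?_ hpos
  calc a * ∑ j, Complex.normSq (x j)
      = ∑ i, a * Complex.normSq ((Q *ᵥ x) i) := by rw [hnorm, mul_sum]
    _ ≤ ∑ i, d i * Complex.normSq ((Q *ᵥ x) i) := sum_le_sum fun i _ => by
        by_cases hi : i ∈ u
        · exact mul_le_mul_of_nonneg_right (hu i hi) (Complex.normSq_nonneg _)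
        · simp [hxu i hi]
    _ = ∑ j, e j * Complex.normSq (x j) := hsum.symm
    _ ≤ ∑ j, b * Complex.normSq (x j) := sum_le_sum fun j _ => by
        by_cases hj : j ∈ s
        · exact mul_le_mul_of_nonneg_right (hs j hj) (Complex.normSq_nonneg _)
        · simp [hxs j hj]
    _ = b * ∑ j, Complex.normSq (x j) := by rw [mul_sum]

theorem Matrix.card_le_card_of_conjTranspose_mul_self_eq_one {m n : Type*} [Fintype m] [Fintype n]
    [DecidableEq n] {Q : Matrix m n ℂ} (hQ : Qᴴ * Q = 1) : Fintype.card n ≤ Fintype.card m := by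
  calc Fintype.card n = (Qᴴ * Q).rank := by rw [hQ, rank_one]
    _ ≤ Q.rank := rank_mul_le_right _ _
    _ ≤ Fintype.card m := rank_le_card_height Q

section Interlacing

variable {m n : Type} [Fintype m] [Fintype n] [DecidableEq m] [DecidableEq n]
  {A : Matrix m m ℂ} {Q : Matrix m n ℂ}

theorem Matrix.IsHermitian.exists_isometry_diagonal_conjTranspose_mul_mul (hA : A.IsHermitian)
    (hQ : Qᴴ * Q = 1) :
    ∃ P : Matrix m n ℂ, Pᴴ * P = 1 ∧ diagonal (Complex.ofReal ∘
      (isHermitian_conjTranspose_mul_mul Q hA).eigenvalues)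
        = Pᴴ * diagonal (Complex.ofReal ∘ hA.eigenvalues) * P := by
  set hB := isHermitian_conjTranspose_mul_mul Q hA
  set U : Matrix m m ℂ := ↑hA.eigenvectorUnitary
  set U' : Matrix n n ℂ := ↑hB.eigenvectorUnitary
  have hU : U * Uᴴ = 1 := Unitary.coe_mul_star_self hA.eigenvectorUnitary
  have hU' : U'ᴴ * U' = 1 := Unitary.coe_star_mul_self hB.eigenvectorUnitary
  have hdA : diagonal (Complex.ofReal ∘ hA.eigenvalues) = Uᴴ * A * U := by
    have h := hA.conjStarAlgAut_star_eigenvectorUnitary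
    rw [Unitary.conjStarAlgAut_star_apply] at h
    exact h.symm
  have hdB : diagonal (Complex.ofReal ∘ hB.eigenvalues) = U'ᴴ * (Qᴴ * A * Q) * U' := by
    have h := hB.conjStarAlgAut_star_eigenvectorUnitary
    rw [Unitary.conjStarAlgAut_star_apply] at h
    exact h.symm
  refine ⟨Uᴴ * Q * U', ?_, ?_⟩
  · simp only [conjTranspose_mul, conjTranspose_conjTranspose, Matrix.mul_assoc]
    rw [← Matrix.mul_assoc U, hU, Matrix.one_mul, ← Matrix.mul_assoc Qᴴ, hQ, Matrix.one_mul, hU']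
  · rw [hdA, hdB]
    simp only [conjTranspose_mul, conjTranspose_conjTranspose, Matrix.mul_assoc]
    rw [← Matrix.mul_assoc U Uᴴ, hU, Matrix.one_mul, ← Matrix.mul_assoc U Uᴴ, hU, Matrix.one_mul]

theorem Matrix.IsHermitian.lamk_le_lamk_conjTranspose_mul_mul (hA : A.IsHermitian)
    (hQ : Qᴴ * Q = 1) {k : ℕ} (hk : k < Fintype.card n) : lamk A k ≤ lamk (Qᴴ * A * Q) k := by
  have hnm := card_le_card_of_conjTranspose_mul_self_eq_one hQ
  obtain ⟨P, hP, hdiag⟩ := hA.exists_isometry_diagonal_conjTranspose_mul_mul hQ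
  obtain ⟨s, hs, hsle⟩ := exists_card_eq_forall_le_kthSmallest
    (isHermitian_conjTranspose_mul_mul Q hA).eigenvalues hk
  obtain ⟨u, hu, hule⟩ := exists_card_eq_forall_kthSmallest_le hA.eigenvalues (hk.trans_le hnm)
  rw [hA.lamk_eq_kthSmallest, (isHermitian_conjTranspose_mul_mul Q hA).lamk_eq_kthSmallest]
  exact le_of_isometry_diagonal hP hdiag (by omega) hsle hule

theorem Matrix.IsHermitian.lamk_conjTranspose_mul_mul_le_lamk (hA : A.IsHermitian)
    (hQ : Qᴴ * Q = 1) {k : ℕ} (hk : k < Fintype.card n) :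
    lamk (Qᴴ * A * Q) k ≤ lamk A (k + (Fintype.card m - Fintype.card n)) := by
  have hnm := card_le_card_of_conjTranspose_mul_self_eq_one hQ
  obtain ⟨P, hP, hdiag⟩ := hA.exists_isometry_diagonal_conjTranspose_mul_mul hQ
  have hdiag_neg :
      diagonal (Complex.ofReal ∘ (-(isHermitian_conjTranspose_mul_mul Q hA).eigenvalues))
        = Pᴴ * diagonal (Complex.ofReal ∘ (-hA.eigenvalues)) * P := by
    have hneg : ∀ {ι : Type} [DecidableEq ι] (f : ι → ℝ),
        diagonal (Complex.ofReal ∘ (-f)) = -diagonal (Complex.ofReal ∘ f) := fun f => by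
      rw [diagonal_neg]; congr 1; ext; simp
    rw [hneg, hneg, hdiag, Matrix.mul_neg, Matrix.neg_mul]
  obtain ⟨s, hs, hsle⟩ := exists_card_eq_forall_kthSmallest_le
    (isHermitian_conjTranspose_mul_mul Q hA).eigenvalues hk
  obtain ⟨u, hu, hule⟩ := exists_card_eq_forall_le_kthSmallest hA.eigenvalues
    (show k + (Fintype.card m - Fintype.card n) < Fintype.card m by omega)
  rw [hA.lamk_eq_kthSmallest, (isHermitian_conjTranspose_mul_mul Q hA).lamk_eq_kthSmallest]
  exact neg_le_neg_iff.mp (le_of_isometry_diagonal hP hdiag_neg (by omega)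
    (fun j hj => neg_le_neg (hsle j hj)) (fun i hi => neg_le_neg (hule i hi)))

end Interlacing

/-- `B` is the compression of `A` along `L : ℂⁿ → ℂᵐ` for the inner products with Gram matrices
`SᴴS` on `ℂᵐ` and `TᴴT` on `ℂⁿ`; `A` is self-adjoint for the first one. -/
theorem lamk_interlace_of_weighted_compression {m n : Type} [Fintype m] [Fintype n]
    [DecidableEq m] [DecidableEq n] {A : Matrix m m ℂ} {B : Matrix n n ℂ} {L : Matrix m n ℂ}
    {S : Matrix m m ℂ} {T : Matrix n n ℂ} (hS : IsUnit S) (hT : IsUnit T)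
    (hA : (Sᴴ * S * A).IsHermitian) (hL : Lᴴ * (Sᴴ * S) * L = Tᴴ * T)
    (hB : Tᴴ * T * B = Lᴴ * (Sᴴ * S) * A * L) {k : ℕ} (hk : k < Fintype.card n) :
    lamk A k ≤ lamk B k ∧ lamk B k ≤ lamk A (k + (Fintype.card m - Fintype.card n)) := by
  have hS' := (isUnit_iff_isUnit_det S).mp hS
  have hT' := (isUnit_iff_isUnit_det T).mp hT
  have hSS : S⁻¹ᴴ * Sᴴ = 1 := by rw [← conjTranspose_mul, mul_nonsing_inv S hS', conjTranspose_one]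
  have hTT : T⁻¹ᴴ * Tᴴ = 1 := by rw [← conjTranspose_mul, mul_nonsing_inv T hT', conjTranspose_one]
  have hH : (S * A * S⁻¹).IsHermitian := by
    convert isHermitian_conjTranspose_mul_mul S⁻¹ hA using 1
    rw [← Matrix.mul_assoc, ← Matrix.mul_assoc, hSS, Matrix.one_mul]
  set P := S * L * T⁻¹
  have hP : Pᴴ * P = 1 := by
    have : Pᴴ * P = T⁻¹ᴴ * (Lᴴ * (Sᴴ * S) * L) * T⁻¹ := by
      simp only [P, conjTranspose_mul, Matrix.mul_assoc]
    rw [this, hL, ← Matrix.mul_assoc, hTT, Matrix.one_mul, mul_nonsing_inv T hT']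
  have hPHP : Pᴴ * (S * A * S⁻¹) * P = T * B * T⁻¹ := by
    have : Pᴴ * (S * A * S⁻¹) * P = T⁻¹ᴴ * (Lᴴ * (Sᴴ * S) * A * L) * T⁻¹ := by
      simp only [P, conjTranspose_mul, Matrix.mul_assoc, nonsing_inv_mul_cancel_left (h := hS')]
    rw [this, ← hB, ← Matrix.mul_assoc, ← Matrix.mul_assoc, hTT, Matrix.one_mul]
  rw [← lamk_conj hS A, ← lamk_conj hT B, ← hPHP]
  exact ⟨hH.lamk_le_lamk_conjTranspose_mul_mul hP hk,
    hH.lamk_conjTranspose_mul_mul_le_lamk hP hk⟩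

section Pullback

variable {α β R : Type*} [DecidableEq β] [CommSemiring R]

theorem Matrix.submatrix_one_mulVec [Fintype β] (π : α → β) (ψ : β → R) :
    (1 : Matrix β β R).submatrix π id *ᵥ ψ = ψ ∘ π := by
  simpa using submatrix_mulVec_equiv (1 : Matrix β β R) ψ π (Equiv.refl β)

theorem Matrix.conjTranspose_submatrix_one_mul_diagonal_mul [Fintype α] [DecidableEq α]
    [StarRing R] (π : α → β) (d : α → R) :
    ((1 : Matrix β β R).submatrix π id)ᴴ * diagonal d * (1 : Matrix β β R).submatrix π id
      = diagonal fun b => ∑ a with π a = b, d a := by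
  ext i j
  rw [mul_apply]
  simp only [mul_diagonal, conjTranspose_apply, submatrix_apply, id, one_apply, diagonal_apply]
  split_ifs with h
  · subst h
    rw [sum_filter]
    exact sum_congr rfl fun a _ => by split_ifs <;> simp
  · refine sum_eq_zero fun a _ => ?_
    split_ifs <;> simp_all

end Pullback

theorem Matrix.ext_of_star_dotProduct_mulVec {n R : Type*} [Fintype n] [DecidableEq n]
    [CommSemiring R] [StarRing R] {M N : Matrix n n R}
    (h : ∀ ψ χ : n → R, star χ ⬝ᵥ (M *ᵥ ψ) = star χ ⬝ᵥ (N *ᵥ ψ)) : M = N := by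
  ext i j
  simpa [mulVec_single_one] using h (Pi.single j 1) (Pi.single i 1)

theorem sum_mul_mulVec_mul_star_mulVec {α β : Type*} [Fintype α] [Fintype β] [DecidableEq α]
    (d : α → ℂ) (M L : Matrix α β ℂ) (ψ χ : β → ℂ) :
    ∑ a, d a * (M *ᵥ ψ) a * star ((L *ᵥ χ) a) = star χ ⬝ᵥ ((Lᴴ * diagonal d * M) *ᵥ ψ) := by
  rw [← mulVec_mulVec, ← mulVec_mulVec, dotProduct_mulVec, ← star_mulVec, dotProduct]
  simp only [mulVec_diagonal, Pi.star_apply]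
  exact sum_congr rfl fun a _ => by ring

theorem conjTranspose_mul_diagonal_mul_eq_of_forall_sum {α β : Type*} [Fintype α] [Fintype β]
    [DecidableEq α] [DecidableEq β] (d : α → ℂ) (L : Matrix α β ℂ) {M N : Matrix α β ℂ}
    (h : ∀ ψ χ : β → ℂ, ∑ a, d a * (M *ᵥ ψ) a * star ((L *ᵥ χ) a)
      = ∑ a, d a * (N *ᵥ ψ) a * star ((L *ᵥ χ) a)) :
    Lᴴ * diagonal d * M = Lᴴ * diagonal d * N :=
  ext_of_star_dotProduct_mulVec fun ψ χ => by
    simpa only [sum_mul_mulVec_mul_star_mulVec] using h ψ χ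

theorem Matrix.conjTranspose_diagonal_sqrt_mul_self {ι : Type*} [Fintype ι] [DecidableEq ι]
    {d : ι → ℝ} (hd : ∀ i, 0 ≤ d i) :
    (diagonal fun i => (√(d i) : ℂ))ᴴ * diagonal (fun i => (√(d i) : ℂ))
      = diagonal fun i => (d i : ℂ) := by
  rw [diagonal_conjTranspose, diagonal_mul_diagonal]
  congr 1; ext i
  simp [← Complex.ofReal_mul, Real.mul_self_sqrt (hd i)]

theorem Matrix.isUnit_diagonal_sqrt {ι : Type*} [Fintype ι] [DecidableEq ι] {d : ι → ℝ}
    (hd : ∀ i, 0 < d i) : IsUnit (diagonal fun i => (√(d i) : ℂ)) :=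
  isUnit_diagonal.mpr <| Pi.isUnit_iff.mpr fun i => by simp [(Real.sqrt_pos.mpr (hd i)).ne']

section MagneticLaplacian

variable {V : Type} [Fintype V] [DecidableEq V]

theorem diagonal_mul_magLap_apply (w : V → V → ℝ) {m : V → ℝ} (hm : ∀ v, m v ≠ 0)
    (α : V → V → ℝ) (v u : V) :
    (diagonal (fun v => (m v : ℂ)) * magLap w m α) v u
      = (if v = u then ((∑ u', w v u' : ℝ) : ℂ) else 0)
        - (w v u : ℂ) * Complex.exp (Complex.I * (α v u : ℝ)) := by
  have : (m v : ℂ) ≠ 0 := by exact_mod_cast hm v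
  rw [diagonal_mul, magLap, mul_sub, mul_ite, mul_zero]
  push_cast
  congr 1
  · split_ifs <;> field_simp
  · field_simp

theorem isHermitian_diagonal_mul_magLap {w : V → V → ℝ} {m : V → ℝ} {α : V → V → ℝ}
    (hw : ∀ v u, w v u = w u v) (hm : ∀ v, m v ≠ 0) (hα : ∀ v u, α v u = -α u v) :
    (diagonal (fun v => (m v : ℂ)) * magLap w m α).IsHermitian := by
  ext v u
  rw [conjTranspose_apply, diagonal_mul_magLap_apply w hm, diagonal_mul_magLap_apply w hm]
  by_cases h : v = u
  · subst h
    simp [show α v v = 0 by linarith [hα v v]]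
  · simp [h, Ne.symm h, star_mul', ← Complex.exp_conj, hw u v, hα u v]

end MagneticLaplacian

section Contraction

variable {V : Type} [DecidableEq V]

noncomputable def contractVertex {v₁ v₂ : V} (hv : v₁ ≠ v₂) (v : V) : {v : V // v ≠ v₂} :=
  if h : v = v₂ then ⟨v₁, hv⟩ else ⟨v, h⟩

theorem contractVertex_val {v₁ v₂ : V} (hv : v₁ ≠ v₂) (j : {v : V // v ≠ v₂}) :
    contractVertex hv j = j :=
  dif_neg j.2

theorem liftFun_eq_comp_contractVertex {v₁ v₂ : V} (hv : v₁ ≠ v₂) (ψ : {v : V // v ≠ v₂} → ℂ) :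
    liftFun hv ψ = ψ ∘ contractVertex hv := by
  funext v
  simp only [liftFun, contractVertex, Function.comp_apply, apply_dite ψ]

theorem card_sub_card_subtype_ne [Fintype V] (a : V) :
    Fintype.card V - Fintype.card {v : V // v ≠ a} = 1 := by
  have := Fintype.card_pos_iff.mpr ⟨a⟩
  rw [Fintype.card_subtype_compl, Fintype.card_subtype_eq]
  omega

end Contraction

theorem stmt13_general {V : Type} [Fintype V] [DecidableEq V]
    (w : V → V → ℝ) (m : V → ℝ) (α : V → V → ℝ)
    (hw_symm : ∀ v u, w v u = w u v)
    (hm : ∀ v, 0 < m v)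
    (hα : ∀ v u, α v u = - α u v)
    (v₁ v₂ : V) (hv : v₁ ≠ v₂)
    (B : Matrix {v : V // v ≠ v₂} {v : V // v ≠ v₂} ℂ)
    (hB : ∀ ψ χ : {v : V // v ≠ v₂} → ℂ,
      (∑ v : V, (m v : ℂ) * liftFun hv (B.mulVec ψ) v * star (liftFun hv χ v))
        = ∑ v : V, (m v : ℂ) * (magLap w m α).mulVec (liftFun hv ψ) v
            * star (liftFun hv χ v)) :
    ∀ k : ℕ, 1 ≤ k → k ≤ Fintype.card V - 1 →
      lamk (magLap w m α) (k - 1) ≤ lamk B (k - 1)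
      ∧ lamk B (k - 1) ≤ lamk (magLap w m α) k := by
  intro k hk₁ hk₂
  set L : Matrix V {v : V // v ≠ v₂} ℂ := (1 : Matrix _ _ ℂ).submatrix (contractVertex hv) id
  set m' : {v : V // v ≠ v₂} → ℝ := fun j => ∑ v with contractVertex hv v = j, m v
  have hm' : ∀ j, 0 < m' j := fun j =>
    sum_pos (fun v _ => hm v) ⟨j.val, by simp [contractVertex_val]⟩
  have hSS := conjTranspose_diagonal_sqrt_mul_self fun v => (hm v).le
  have hTT := conjTranspose_diagonal_sqrt_mul_self fun j => (hm' j).le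
  have hL : Lᴴ * diagonal (fun v => (m v : ℂ)) * L = diagonal fun j => (m' j : ℂ) := by
    simp only [L, m', conjTranspose_submatrix_one_mul_diagonal_mul, Complex.ofReal_sum]
  have hBL : Lᴴ * diagonal (fun v => (m v : ℂ)) * (L * B)
      = Lᴴ * diagonal (fun v => (m v : ℂ)) * (magLap w m α * L) :=
    conjTranspose_mul_diagonal_mul_eq_of_forall_sum _ _ fun ψ χ => by
      simpa only [liftFun_eq_comp_contractVertex, ← submatrix_one_mulVec, mulVec_mulVec]
        using hB ψ χ
  have hcard := card_sub_card_subtype_ne v₂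
  have := lamk_interlace_of_weighted_compression (k := k - 1)
    (isUnit_diagonal_sqrt hm) (isUnit_diagonal_sqrt hm')
    (hSS ▸ isHermitian_diagonal_mul_magLap hw_symm (fun v => (hm v).ne') hα)
    (by rwa [hSS, hTT])
    (by rw [hSS, hTT, ← hL, Matrix.mul_assoc _ L, hBL]; simp only [Matrix.mul_assoc])
    (by omega)
  rwa [hcard, Nat.sub_add_cancel hk₁] at this

/-- contracting two vertices in the measure-preserving sense:
the eigenvalues `μ_k` of the compression `Δ̃` of `Δ(w,m,α)` to the subspace
`S = {φ : φ(v₁) = φ(v₂)}` (with the weighted inner product `⟨·,·⟩_m`)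
interlace the eigenvalues of `Δ(w,m,α)`: `λ_k ≤ μ_k ≤ λ_{k+1}`.  Here `S` is
coordinatised by `ℂ^{V ∖ {v₂}}` via `liftFun`, and the compression is any
matrix `B` with `⟨L(Bψ), Lχ⟩_m = ⟨Δ(Lψ), Lχ⟩_m` for all `ψ, χ`. -/
theorem stmt13 {V : Type} [Fintype V] [DecidableEq V] [Nonempty V]
    (hn : 2 ≤ Fintype.card V)
    (w : V → V → ℝ) (m : V → ℝ) (α : V → V → ℝ)
    (hw_symm : ∀ v u, w v u = w u v) (hw_nonneg : ∀ v u, 0 ≤ w v u)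
    (hw_diag : ∀ v, w v v = 0) (hm : ∀ v, 0 < m v)
    (hα : ∀ v u, α v u = - α u v)
    (v₁ v₂ : V) (hv : v₁ ≠ v₂)
    (B : Matrix {v : V // v ≠ v₂} {v : V // v ≠ v₂} ℂ)
    (hB : ∀ ψ χ : {v : V // v ≠ v₂} → ℂ,
      (∑ v : V, (m v : ℂ) * liftFun hv (B.mulVec ψ) v * star (liftFun hv χ v))
        = ∑ v : V, (m v : ℂ) * (magLap w m α).mulVec (liftFun hv ψ) v
            * star (liftFun hv χ v)) :
    ∀ k : ℕ, 1 ≤ k → k ≤ Fintype.card V - 1 →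
      lamk (magLap w m α) (k - 1) ≤ lamk B (k - 1)
      ∧ lamk B (k - 1) ≤ lamk (magLap w m α) k :=
  stmt13_general w m α hw_symm hm hα v₁ v₂ hv B hB
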